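/- Let N ≥ 2 be an integer and let c, d, k be positive integers with gcd(c, d) = 1 and N dividing c. Then Σ_{v | N} (μ(v)/v)(s(d, vc/N) - s(d, vc/N + vkd)) = (N² k (d² + 1))/(12 c (c + kNd)) · Π_{p | N} (1 - p⁻²), where the sum runs over positive divisors v of N, μ is the Möbius function, s is the classical Dedekind sum, and the product runs over primes p dividing N. -/

import Mathlib

open Classical in
/-- The sawtooth function `((x))`. -/
noncomputable def sawtooth (x : ℝ) : ℝ :=
  if ∃ n : ℤ, x = (n : ℝ) then 0 else x - ⌊x⌋ - 1/2

/-- The Dedekind sum `s(d, c)` (defined by the sawtooth sum for any modulus `c`). -/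
noncomputable def dedekindSum (d c : ℕ) : ℝ :=
  ∑ m ∈ Finset.range c, sawtooth ((d : ℝ) * m / c) * sawtooth ((m : ℝ) / c)

/-!
Reciprocity `s(d, c) + s(c, d) = -1/4 + (c² + d² + 1) / (12 c d)` together with the periodicity
`s(c + j d, d) = s(c, d)` gives `s(d, c') - s(d, c' + j d)` in closed form. For `c' = v c / N` and
`j = v k` the `v`-th summand becomes `μ(v) (A / v² - k / 12)` with `A` independent of `v`, and the
theorem follows from `∑_{v ∣ N} μ(v) = 0` and `∑_{v ∣ N} μ(v) / v² = ∏_{p ∣ N} (1 - p⁻²)`.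
Reciprocity is proved by the classical count of lattice points on either side of the diagonal of
the rectangle `[0, c) × [0, d)`.
-/

open Finset

lemma sawtooth_add_intCast (x : ℝ) (n : ℤ) : sawtooth (x + n) = sawtooth x := by
  have hint : (∃ m : ℤ, x + n = m) ↔ ∃ m : ℤ, x = m :=
    ⟨fun ⟨m, hm⟩ => ⟨m - n, by push_cast; linarith⟩,
      fun ⟨m, hm⟩ => ⟨m + n, by push_cast; linarith⟩⟩
  unfold sawtooth
  by_cases hx : ∃ m : ℤ, x = m
  · rw [if_pos hx, if_pos (hint.2 hx)]
  · rw [if_neg hx, if_neg (mt hint.1 hx), Int.floor_add_intCast]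
    push_cast
    ring

lemma sawtooth_zero : sawtooth 0 = 0 := by
  rw [sawtooth, if_pos ⟨0, by simp⟩]

lemma sawtooth_natCast_div {a c : ℕ} (hc : 0 < c) (h : ¬ c ∣ a) :
    sawtooth ((a : ℝ) / c) = ((a % c : ℕ) : ℝ) / c - 1 / 2 := by
  have hfract : Int.fract ((a : ℝ) / c) = ((a % c : ℕ) : ℝ) / c :=
    Int.fract_div_natCast_eq_div_natCast_mod
  have hnot : ¬ ∃ n : ℤ, (a : ℝ) / c = n := by
    rintro ⟨n, hn⟩
    have : ((a % c : ℕ) : ℝ) / c = 0 := by rw [← hfract, hn, Int.fract_intCast]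
    have : a % c = 0 := by simpa [hc.ne'] using this
    exact h (Nat.dvd_of_mod_eq_zero this)
  rw [sawtooth, if_neg hnot, Int.self_sub_floor, hfract]

lemma sum_range_mul_mod {M : Type*} [AddCommMonoid M] (g : ℕ → M) {d c : ℕ}
    (h : Nat.Coprime d c) :
    ∑ m ∈ range c, g (d * m % c) = ∑ m ∈ range c, g m := by
  rcases Nat.eq_zero_or_pos c with rfl | hc
  · simp
  have hinj : Set.InjOn (fun m => d * m % c) (range c) := by
    intro a ha b hb hab
    exact Nat.ModEq.eq_of_lt_of_lt (Nat.ModEq.cancel_left_of_coprime h.symm hab)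
      (mem_range.1 ha) (mem_range.1 hb)
  have himage : (range c).image (fun m => d * m % c) = range c :=
    eq_of_subset_of_card_le (fun x hx => by
        obtain ⟨m, -, rfl⟩ := mem_image.1 hx
        exact mem_range.2 (Nat.mod_lt _ hc))
      (card_image_of_injOn hinj).ge
  rw [← sum_image hinj, himage]

lemma sum_range_natCast (n : ℕ) : ∑ i ∈ range n, (i : ℝ) = n * (n - 1) / 2 := by
  induction n with
  | zero => simp
  | succ n ih => rw [sum_range_succ, ih]; push_cast; ring

lemma sum_range_natCast_sq (n : ℕ) :
    ∑ i ∈ range n, (i : ℝ) ^ 2 = n * (n - 1) * (2 * n - 1) / 6 := by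
  induction n with
  | zero => simp
  | succ n ih => rw [sum_range_succ, ih]; push_cast; ring

/-- The correction at `m = 0` is because `((0)) = 0`, not `-1/2`. -/
lemma sawtooth_mul_sawtooth {d c m : ℕ} (h : Nat.Coprime d c) (hm : m < c) :
    sawtooth ((d : ℝ) * m / c) * sawtooth ((m : ℝ) / c) =
      (((d * m % c : ℕ) : ℝ) / c - 1 / 2) * ((m : ℝ) / c - 1 / 2) -
        if m = 0 then 1 / 4 else 0 := by
  rcases Nat.eq_zero_or_pos m with rfl | hm0
  · norm_num [sawtooth_zero]
  have hc : 0 < c := hm0.trans hm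
  have hndvd : ¬ c ∣ d * m := fun hdvd =>
    (Nat.le_of_dvd hm0 (h.symm.dvd_of_dvd_mul_left hdvd)).not_gt hm
  rw [if_neg hm0.ne', sub_zero, ← Nat.cast_mul, sawtooth_natCast_div hc hndvd,
    sawtooth_natCast_div hc (fun hdvd => (Nat.le_of_dvd hm0 hdvd).not_gt hm), Nat.mod_eq_of_lt hm]

lemma dedekindSum_eq_sum_mul_mul_mod {d c : ℕ} (hc : 0 < c) (h : Nat.Coprime d c) :
    dedekindSum d c = (∑ m ∈ range c, m * (d * m % c) : ℕ) / (c : ℝ) ^ 2 - ((c : ℝ) - 1) / 4 := by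
  have hcR : (c : ℝ) ≠ 0 := by positivity
  have hterm : ∀ m ∈ range c, sawtooth ((d : ℝ) * m / c) * sawtooth ((m : ℝ) / c) =
      (((m * (d * m % c) : ℕ) : ℝ) / c ^ 2 - ((d * m % c : ℕ) : ℝ) / (2 * c) - (m : ℝ) / (2 * c)
        + 1 / 4) - if m = 0 then 1 / 4 else 0 := by
    intro m hm
    rw [sawtooth_mul_sawtooth h (mem_range.1 hm)]
    push_cast
    field_simp
    ring
  have hres : ∑ m ∈ range c, ((d * m % c : ℕ) : ℝ) = ∑ m ∈ range c, (m : ℝ) :=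
    sum_range_mul_mod (fun m => (m : ℝ)) h
  rw [dedekindSum, sum_congr rfl hterm, sum_sub_distrib, sum_add_distrib, sum_sub_distrib,
    sum_sub_distrib, ← sum_div, ← sum_div, ← sum_div, hres, sum_ite_eq' (range c) 0,
    if_pos (mem_range.2 hc), sum_const, card_range, sum_range_natCast]
  push_cast
  field_simp
  ring

lemma sum_mul_mod_add_mul_sum_mul_div (d c : ℕ) :
    ∑ m ∈ range c, m * (d * m % c) + c * ∑ m ∈ range c, m * (d * m / c) =
      d * ∑ m ∈ range c, m ^ 2 := by
  rw [mul_sum, mul_sum, ← sum_add_distrib]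
  refine sum_congr rfl fun m _ => ?_
  calc m * (d * m % c) + c * (m * (d * m / c)) = m * (d * m % c + c * (d * m / c)) := by ring
    _ = d * m ^ 2 := by rw [Nat.mod_add_div]; ring

lemma sq_mul_sum_div_mul_div_add_one (d c : ℕ) :
    d ^ 2 * ∑ n ∈ range d, (c * n / d) * (c * n / d + 1) + 2 * c * ∑ n ∈ range d, n * (c * n % d)
        + d * ∑ n ∈ range d, c * n % d =
      c ^ 2 * ∑ n ∈ range d, n ^ 2 + ∑ n ∈ range d, (c * n % d) ^ 2
        + c * d * ∑ n ∈ range d, n := by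
  simp only [mul_sum, ← sum_add_distrib]
  refine sum_congr rfl fun n _ => ?_
  have h := Nat.div_add_mod (c * n) d
  generalize c * n / d = b at h
  generalize c * n % d = r at h
  zify at h ⊢
  linear_combination (c * n - r + d + d * b) * h

lemma filter_Ico_mul_le_mul {c d m : ℕ} (hc : 0 < c) (hd : 0 < d) (hm : m < c) :
    {n ∈ Ico 1 d | c * n ≤ d * m} = Ico 1 (d * m / c + 1) := by
  have hlt : d * m / c < d := (Nat.div_lt_iff_lt_mul hc).2 (Nat.mul_lt_mul_of_pos_left hm hd)
  ext n
  simp only [mem_filter, mem_Ico, Nat.lt_add_one_iff, Nat.le_div_iff_mul_le hc, mul_comm n c]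
  constructor
  · rintro ⟨⟨h1, -⟩, h2⟩; exact ⟨h1, h2⟩
  · rintro ⟨h1, h2⟩
    exact ⟨⟨h1, lt_of_le_of_lt ((Nat.le_div_iff_mul_le hc).2 (by rwa [mul_comm])) hlt⟩, h2⟩

lemma filter_range_mul_le_mul {c d n : ℕ} (hd : 0 < d) (h : Nat.Coprime c d) (hn : n ∈ Ico 1 d) :
    {m ∈ range c | c * n ≤ d * m} = Ico (c * n / d + 1) c := by
  obtain ⟨hn1, hnd⟩ := mem_Ico.1 hn
  have hne : ∀ m, c * n ≠ d * m := fun m heq =>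
    (Nat.le_of_dvd hn1 (h.symm.dvd_of_dvd_mul_left ⟨m, heq⟩)).not_gt hnd
  ext m
  simp only [mem_filter, mem_range, mem_Ico, Nat.add_one_le_iff, Nat.div_lt_iff_lt_mul hd,
    mul_comm m d]
  exact ⟨fun ⟨h1, h2⟩ => ⟨lt_of_le_of_ne h2 (hne m), h1⟩, fun ⟨h1, h2⟩ => ⟨h2, h1.le⟩⟩

lemma two_mul_sum_Ico_add_mul_succ {b c : ℕ} (hb : b + 1 ≤ c) :
    2 * ∑ m ∈ Ico (b + 1) c, m + b * (b + 1) = c * (c - 1) := by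
  have hsplit := sum_range_add_sum_Ico (fun m => m) hb
  have hb' := sum_range_id_mul_two (b + 1)
  have hc' := sum_range_id_mul_two c
  rw [Nat.add_sub_cancel] at hb'
  nlinarith

/-- Both sides sum `2m` over the lattice points `(m, n)` with `0 ≤ m < c`, `1 ≤ n < d`: those below
the diagonal `c n = d m` are counted by rows, those above by columns, and by coprimality none lies
on it. -/
lemma sum_mul_div_reciprocity {c d : ℕ} (hc : 0 < c) (hd : 0 < d) (h : Nat.Coprime c d) :
    2 * ∑ m ∈ range c, m * (d * m / c) + ∑ n ∈ range d, (c * n / d) * (c * n / d + 1) =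
      (d - 1) * (c * (c - 1)) := by
  have hrow : ∀ m ∈ range c, m * (d * m / c) = ∑ n ∈ Ico 1 d, if c * n ≤ d * m then m else 0 := by
    intro m hm
    rw [← sum_filter, filter_Ico_mul_le_mul hc hd (mem_range.1 hm), sum_const, Nat.card_Ico,
      smul_eq_mul, Nat.add_sub_cancel, mul_comm]
  have hcol : ∀ n ∈ Ico 1 d, (∑ m ∈ range c, if c * n ≤ d * m then m else 0) =
      ∑ m ∈ Ico (c * n / d + 1) c, m := by
    intro n hn
    rw [← sum_filter, filter_range_mul_le_mul hd h hn]
  have hcol_le : ∀ n ∈ Ico 1 d, c * n / d + 1 ≤ c := by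
    intro n hn
    exact (Nat.div_lt_iff_lt_mul hd).2 (Nat.mul_lt_mul_of_pos_left (mem_Ico.1 hn).2 hc)
  rw [sum_congr rfl hrow, sum_comm, sum_congr rfl hcol, range_eq_Ico,
    sum_eq_sum_Ico_succ_bot hd, mul_sum, Nat.mul_zero, Nat.zero_div, zero_mul, zero_add,
    ← sum_add_distrib, sum_congr rfl fun n hn => two_mul_sum_Ico_add_mul_succ (hcol_le n hn),
    sum_const, Nat.card_Ico, smul_eq_mul]

lemma dedekindSum_add_dedekindSum {c d : ℕ} (hc : 0 < c) (hd : 0 < d) (h : Nat.Coprime c d) :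
    dedekindSum d c + dedekindSum c d =
      -(1 / 4) + ((c : ℝ) ^ 2 + (d : ℝ) ^ 2 + 1) / (12 * c * d) := by
  have hmod := congrArg (Nat.cast : ℕ → ℝ) (sum_mul_mod_add_mul_sum_mul_div d c)
  have hlattice := congrArg (Nat.cast : ℕ → ℝ) (sum_mul_div_reciprocity hc hd h)
  have hsq := congrArg (Nat.cast : ℕ → ℝ) (sq_mul_sum_div_mul_div_add_one d c)
  rw [sum_range_mul_mod (fun n => n) h, sum_range_mul_mod (fun n => n ^ 2) h] at hsq
  push_cast [Nat.one_le_iff_ne_zero.2 hc.ne', Nat.one_le_iff_ne_zero.2 hd.ne'] at hmod hlattice hsq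
  rw [sum_range_natCast_sq] at hmod hsq
  rw [sum_range_natCast] at hsq
  rw [dedekindSum_eq_sum_mul_mul_mod hc h.symm, dedekindSum_eq_sum_mul_mul_mod hd h]
  push_cast
  have hcR : (c : ℝ) ≠ 0 := by positivity
  have hdR : (d : ℝ) ≠ 0 := by positivity
  field_simp
  -- the two floor sums cancel out of this combination
  linear_combination 48 * d ^ 2 * hmod - 24 * c * d ^ 2 * hlattice + 24 * c * hsq

lemma dedekindSum_add_mul_self (a t c : ℕ) : dedekindSum (a + t * c) c = dedekindSum a c := by
  rcases Nat.eq_zero_or_pos c with rfl | hc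
  · simp [dedekindSum]
  refine sum_congr rfl fun m _ => ?_
  have hshift : ((a + t * c : ℕ) : ℝ) * m / c = (a : ℝ) * m / c + ((t * m : ℕ) : ℤ) := by
    push_cast
    field_simp
  rw [hshift, sawtooth_add_intCast]

lemma dedekindSum_sub_dedekindSum_add_mul {d c : ℕ} (j : ℕ) (hc : 0 < c) (hd : 0 < d)
    (h : Nat.Coprime c d) :
    dedekindSum d c - dedekindSum d (c + j * d) =
      (j : ℝ) / 12 * (((d : ℝ) ^ 2 + 1) / (c * (c + j * d)) - 1) := by
  have h' : Nat.Coprime (c + j * d) d := (Nat.coprime_add_mul_right_left c d j).2 h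
  have hrec := dedekindSum_add_dedekindSum hc hd h
  have hrec' := dedekindSum_add_dedekindSum (by omega) hd h'
  rw [dedekindSum_add_mul_self] at hrec'
  push_cast at hrec'
  have hcR : (0 : ℝ) < c := by exact_mod_cast hc
  have hdR : (0 : ℝ) < d := by exact_mod_cast hd
  have hcjd : (0 : ℝ) < c + j * d := by positivity
  rw [show dedekindSum d c - dedekindSum d (c + j * d) =
      ((c : ℝ) ^ 2 + d ^ 2 + 1) / (12 * c * d) -
        ((c + j * d) ^ 2 + d ^ 2 + 1) / (12 * (c + j * d) * d) by linarith]
  field_simp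
  ring

lemma inv_mul_dedekindSum_sub_dedekindSum {v c d : ℕ} (k : ℕ) (hv : 0 < v) (hc : 0 < c)
    (hd : 0 < d) (h : Nat.Coprime (v * c) d) :
    (v : ℝ)⁻¹ * (dedekindSum d (v * c) - dedekindSum d (v * c + v * k * d)) =
      k * ((d : ℝ) ^ 2 + 1) / (12 * c * (c + k * d)) / (v : ℝ) ^ 2 - k / 12 := by
  rw [dedekindSum_sub_dedekindSum_add_mul (v * k) (Nat.mul_pos hv hc) hd h]
  have : (0 : ℝ) < v := by exact_mod_cast hv
  have : (0 : ℝ) < c := by exact_mod_cast hc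
  have : (0 : ℝ) < c + k * d := by positivity
  push_cast
  field_simp

section

open ArithmeticFunction UniqueFactorizationMonoid
open scoped ArithmeticFunction.Moebius

lemma sum_divisors_moebius_mul_eq_prod {R : Type*} [CommRing R] (f : ArithmeticFunction R)
    (hf : f.IsMultiplicative) {n : ℕ} (hn : n ≠ 0) :
    ∑ v ∈ n.divisors, (μ v : R) * f v = ∏ p ∈ n.primeFactors, (1 - f p) := by
  rw [← Nat.primeFactors_radical,
    IsMultiplicative.prodPrimeFactors_one_sub_of_squarefree f hf squarefree_radical]
  refine (sum_subset (Nat.divisors_subset_of_dvd hn radical_dvd_self) fun v hv hvr => ?_).symm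
  rw [moebius_eq_zero_of_not_squarefree, Int.cast_zero, zero_mul]
  exact fun hsq => hvr (Nat.mem_divisors.2
    ⟨(dvd_radical_iff hsq.isRadical hn).2 (Nat.dvd_of_mem_divisors hv), radical_ne_zero⟩)

lemma sum_divisors_moebius_div_sq {n : ℕ} (hn : n ≠ 0) :
    ∑ v ∈ n.divisors, (μ v : ℝ) / (v : ℝ) ^ 2 = ∏ p ∈ n.primeFactors, (1 - ((p : ℝ) ^ 2)⁻¹) := by
  let f : ArithmeticFunction ℝ := ⟨fun v => ((v : ℝ) ^ 2)⁻¹, by simp⟩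
  have hf : f.IsMultiplicative :=
    ⟨by simp [f], fun {m n} _ => by simp only [f, coe_mk]; push_cast; rw [mul_pow, mul_inv]⟩
  simpa [div_eq_mul_inv, f] using sum_divisors_moebius_mul_eq_prod f hf hn

lemma sum_divisors_moebius_eq_zero {n : ℕ} (hn : 1 < n) : ∑ v ∈ n.divisors, (μ v : ℝ) = 0 := by
  have h := congrArg (· n) (coe_moebius_mul_coe_zeta (R := ℝ))
  rwa [coe_mul_zeta_apply, one_apply_ne hn.ne'] at h

end

theorem moebius_dedekind_sum_identity_general (N c d k : ℕ) (hN : 2 ≤ N) (hc : 0 < c)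
    (hd : 0 < d) (hcd : Nat.Coprime c d) (hNc : N ∣ c) :
    ∑ v ∈ N.divisors, ((ArithmeticFunction.moebius v : ℝ) / v) *
        (dedekindSum d (v * c / N) - dedekindSum d (v * c / N + v * k * d)) =
      ((N : ℝ)^2 * k * ((d : ℝ)^2 + 1)) / (12 * c * (c + k * N * d)) *
        ∏ p ∈ N.primeFactors, (1 - ((p : ℝ)^2)⁻¹) := by
  obtain ⟨c₀, rfl⟩ := hNc
  have hc₀ : 0 < c₀ := Nat.pos_of_mul_pos_left hc
  have hterm : ∀ v ∈ N.divisors,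
      (ArithmeticFunction.moebius v : ℝ) / v *
          (dedekindSum d (v * (N * c₀) / N) - dedekindSum d (v * (N * c₀) / N + v * k * d)) =
        k * ((d : ℝ) ^ 2 + 1) / (12 * c₀ * (c₀ + k * d)) *
            ((ArithmeticFunction.moebius v : ℝ) / (v : ℝ) ^ 2) -
          k / 12 * (ArithmeticFunction.moebius v : ℝ) := by
    intro v hv
    have hcop : Nat.Coprime (v * c₀) d :=
      Nat.Coprime.coprime_dvd_left (mul_dvd_mul_right (Nat.dvd_of_mem_divisors hv) c₀) hcd
    rw [mul_left_comm, Nat.mul_div_cancel_left _ (by omega), div_eq_mul_inv, mul_assoc,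
      inv_mul_dedekindSum_sub_dedekindSum k (Nat.pos_of_mem_divisors hv) hc₀ hd hcop]
    ring
  rw [sum_congr rfl hterm, sum_sub_distrib, ← mul_sum, ← mul_sum, sum_divisors_moebius_eq_zero hN,
    sum_divisors_moebius_div_sq (by omega), mul_zero, sub_zero]
  have : (0 : ℝ) < N := by positivity
  have : (0 : ℝ) < c₀ := by exact_mod_cast hc₀
  have : (0 : ℝ) < c₀ + k * d := by positivity
  push_cast
  field_simp

theorem moebius_dedekind_sum_identity (N c d k : ℕ) (hN : 2 ≤ N) (hc : 0 < c)
    (hd : 0 < d) (hk : 0 < k) (hcd : Nat.Coprime c d) (hNc : N ∣ c) :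
    ∑ v ∈ N.divisors, ((ArithmeticFunction.moebius v : ℝ) / v) *
        (dedekindSum d (v * c / N) - dedekindSum d (v * c / N + v * k * d)) =
      ((N : ℝ)^2 * k * ((d : ℝ)^2 + 1)) / (12 * c * (c + k * N * d)) *
        ∏ p ∈ N.primeFactors, (1 - ((p : ℝ)^2)⁻¹) :=
  moebius_dedekind_sum_identity_general N c d k hN hc hd hcd hNc
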